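/- arXiv:1811.12906 — 2 statements merged into one kernel-verified Lean document; each statement's English description precedes it below -/
import Mathlib

section
/- For two unit vectors e1, e2 in ℝ² with angle γ ∈ (0, π) between them, Jamet's angle θ({e1,e2}) = max_{u∈S^1} min(arccos|⟨u,e1⟩|, arccos|⟨u,e2⟩|) satisfies θ({e1,e2}) = max(γ, π−γ)/2. -/
open Metric

private lemma iInf_fin2 (f : Fin 2 → ℝ) : ⨅ i, f i = min (f 0) (f 1) := by
  apply le_antisymm
  · exact le_min (ciInf_le (Set.Finite.bddBelow (Set.finite_range f)) 0)
      (ciInf_le (Set.Finite.bddBelow (Set.finite_range f)) 1)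
  · exact le_ciInf fun i => by fin_cases i <;> simp [min_le_left, min_le_right]

private lemma arccos_anti {x y : ℝ} (h : x ≤ y) : Real.arccos y ≤ Real.arccos x := by
  unfold Real.arccos
  have := Real.monotone_arcsin h
  linarith

private lemma inner_expand (w z : EuclideanSpace ℝ (Fin 2)) :
    (inner ℝ w z : ℝ) = w 0 * z 0 + w 1 * z 1 := by
  simp [PiLp.inner_apply, Fin.sum_univ_two, RCLike.inner_apply]; ring

private lemma eq_of_sq_eq {a b : ℝ} (ha : 0 ≤ a) (hb : 0 ≤ b) (h : a ^ 2 = b ^ 2) :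
    a = b := by
  rw [← Real.sqrt_sq ha, ← Real.sqrt_sq hb, h]

private lemma contra_lem {c x y : ℝ}
    (key : x ^ 2 + y ^ 2 - 2 * c * (x * y) = 1 - c ^ 2)
    (hx : x ^ 2 < (1 - |c|) / 2) (hy : y ^ 2 < (1 - |c|) / 2) : False := by
  set k := |c| with hk
  have hk0 : 0 ≤ k := abs_nonneg c
  have h2 : -(c * (x * y)) ≤ k * |x * y| := by
    have := neg_abs_le (c * (x * y))
    rw [abs_mul] at this
    linarith
  have h3 : |x * y| * (2 * k) ≤ (x ^ 2 + y ^ 2) * k := by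
    have habs : 2 * |x * y| ≤ x ^ 2 + y ^ 2 := by
      rw [abs_mul]
      nlinarith [sq_nonneg (|x| - |y|), sq_abs x, sq_abs y, abs_nonneg x, abs_nonneg y]
    nlinarith
  have h4 : x ^ 2 + y ^ 2 < 1 - k := by linarith
  have h5 : (x ^ 2 + y ^ 2) * (1 + k) < (1 - k) * (1 + k) := by
    have : 0 < 1 + k := by linarith
    nlinarith
  have h6 : k ^ 2 = c ^ 2 := sq_abs c
  nlinarith

/-- Jamet's angle of a `d`-tuple of unit vectors in `ℝ^d`:
`θ(E) = max_{u ∈ S^{d-1}} min_i arccos |⟨u, e_i⟩|`. -/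
noncomputable def jamet (d : ℕ) (e : Fin d → EuclideanSpace ℝ (Fin d)) : ℝ :=
  sSup ((fun u => ⨅ i, Real.arccos |(inner ℝ u (e i) : ℝ)|) ''
    sphere (0 : EuclideanSpace ℝ (Fin d)) 1)

set_option maxHeartbeats 1000000 in
/-- For unit vectors `e1, e2` in `ℝ²` making an angle `γ ∈ (0, π)`,
Jamet's angle is `θ({e1, e2}) = max(γ, π − γ) / 2`. -/
theorem jamet_two_eq (e1 e2 : EuclideanSpace ℝ (Fin 2))
    (he1 : ‖e1‖ = 1) (he2 : ‖e2‖ = 1) (γ : ℝ) (hγ0 : 0 < γ) (hγπ : γ < Real.pi)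
    (hcos : (inner ℝ e1 e2 : ℝ) = Real.cos γ) :
    jamet 2 ![e1, e2] = max γ (Real.pi - γ) / 2 := by
  have hπ := Real.pi_pos
  set c : ℝ := Real.cos γ with hcdef
  set M : ℝ := max γ (Real.pi - γ) / 2 with hMdef
  have hM0 : 0 ≤ M := by
    have := le_max_left γ (Real.pi - γ); rw [hMdef]; linarith
  have hMπ2 : M < Real.pi / 2 := by
    have : max γ (Real.pi - γ) < Real.pi := max_lt hγπ (by linarith)
    rw [hMdef]; linarith
  have hMπ : M ≤ Real.pi := by linarith
  have hcosM_nonneg : 0 ≤ Real.cos M :=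
    Real.cos_nonneg_of_mem_Icc ⟨by linarith, hMπ2.le⟩
  have hc1 : c < 1 := by
    have h := Real.cos_lt_cos_of_nonneg_of_le_pi le_rfl hγπ.le hγ0
    simpa [hcdef] using h
  have hcn1 : -1 < c := by
    have h := Real.cos_lt_cos_of_nonneg_of_le_pi hγ0.le le_rfl hγπ
    rw [Real.cos_pi] at h; exact h
  have hcosM_sq : Real.cos M ^ 2 = (1 - |c|) / 2 := by
    rcases le_or_gt (Real.pi / 2) γ with h | h
    · have hmax : max γ (Real.pi - γ) = γ := max_eq_left (by linarith)
      have hcneg : c ≤ 0 :=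
        Real.cos_nonpos_of_pi_div_two_le_of_le h (by linarith)
      rw [hMdef, hmax, Real.cos_half (by linarith) hγπ.le,
        Real.sq_sqrt (by nlinarith)]
      rw [abs_of_nonpos hcneg]; ring
    · have hmax : max γ (Real.pi - γ) = Real.pi - γ := max_eq_right (by linarith)
      have hcpos : 0 ≤ c := Real.cos_nonneg_of_mem_Icc ⟨by linarith, h.le⟩
      have hsin : Real.cos ((Real.pi - γ) / 2) = Real.sin (γ / 2) := by
        rw [show (Real.pi - γ) / 2 = Real.pi / 2 - γ / 2 by ring,
          Real.cos_pi_div_two_sub]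
      rw [hMdef, hmax, hsin, Real.sin_half_eq_sqrt (by linarith) (by linarith),
        Real.sq_sqrt (by nlinarith)]
      rw [abs_of_nonneg hcpos]
  -- unit vector coordinates
  have hA : (e1 0) ^ 2 + (e1 1) ^ 2 = 1 := by
    have := real_inner_self_eq_norm_sq e1
    rw [inner_expand, he1] at this; nlinarith
  have hB : (e2 0) ^ 2 + (e2 1) ^ 2 = 1 := by
    have := real_inner_self_eq_norm_sq e2
    rw [inner_expand, he2] at this; nlinarith
  have hC : e1 0 * e2 0 + e1 1 * e2 1 = c := by
    rw [← hcos, inner_expand]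
  apply IsGreatest.csSup_eq
  constructor
  · -- membership: witness
    have hwit : ∃ u ∈ sphere (0 : EuclideanSpace ℝ (Fin 2)) 1,
        |(inner ℝ u e1 : ℝ)| = Real.cos M ∧ |(inner ℝ u e2 : ℝ)| = Real.cos M := by
      rcases le_or_gt (Real.pi / 2) γ with h | h
      · -- bisector of e1, e2
        have hcneg : c ≤ 0 :=
          Real.cos_nonpos_of_pi_div_two_le_of_le h (by linarith)
        have h20 : (0:ℝ) < 2 + 2 * c := by linarith
        set v : EuclideanSpace ℝ (Fin 2) := e1 + e2 with hv
        have hn2 : ‖v‖ ^ 2 = 2 + 2 * c := by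
          rw [hv, norm_add_sq_real, he1, he2, hcos]; ring
        have hn0 : 0 < ‖v‖ := by
          rcases (norm_nonneg v).lt_or_eq with h' | h'
          · exact h'
          · exfalso; rw [← h'] at hn2; nlinarith
        have hinv2 : (‖v‖⁻¹) ^ 2 = (2 + 2 * c)⁻¹ := by
          rw [inv_pow, hn2]
        refine ⟨‖v‖⁻¹ • v, ?_, ?_, ?_⟩
        · rw [mem_sphere_zero_iff_norm, norm_smul, norm_inv, norm_norm,
            inv_mul_cancel₀ hn0.ne']
        · have hx : (inner ℝ (‖v‖⁻¹ • v) e1 : ℝ) = ‖v‖⁻¹ * (1 + c) := by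
            rw [real_inner_smul_left, hv, inner_add_left,
              real_inner_self_eq_norm_sq, he1, real_inner_comm, hcos]
            ring
          refine eq_of_sq_eq (abs_nonneg _) hcosM_nonneg ?_
          rw [sq_abs, hx, hcosM_sq, abs_of_nonpos hcneg, mul_pow, hinv2]
          field_simp
          ring
        · have hx : (inner ℝ (‖v‖⁻¹ • v) e2 : ℝ) = ‖v‖⁻¹ * (1 + c) := by
            rw [real_inner_smul_left, hv, inner_add_left,
              real_inner_self_eq_norm_sq, he2, hcos]
            ring
          refine eq_of_sq_eq (abs_nonneg _) hcosM_nonneg ?_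
          rw [sq_abs, hx, hcosM_sq, abs_of_nonpos hcneg, mul_pow, hinv2]
          field_simp
          ring
      · -- bisector of e1, -e2
        have hcpos : 0 ≤ c := Real.cos_nonneg_of_mem_Icc ⟨by linarith, h.le⟩
        have h20 : (0:ℝ) < 2 - 2 * c := by linarith
        set v : EuclideanSpace ℝ (Fin 2) := e1 - e2 with hv
        have hn2 : ‖v‖ ^ 2 = 2 - 2 * c := by
          rw [hv, norm_sub_sq_real, he1, he2, hcos]; ring
        have hn0 : 0 < ‖v‖ := by
          rcases (norm_nonneg v).lt_or_eq with h' | h'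
          · exact h'
          · exfalso; rw [← h'] at hn2; nlinarith
        have hinv2 : (‖v‖⁻¹) ^ 2 = (2 - 2 * c)⁻¹ := by
          rw [inv_pow, hn2]
        refine ⟨‖v‖⁻¹ • v, ?_, ?_, ?_⟩
        · rw [mem_sphere_zero_iff_norm, norm_smul, norm_inv, norm_norm,
            inv_mul_cancel₀ hn0.ne']
        · have hx : (inner ℝ (‖v‖⁻¹ • v) e1 : ℝ) = ‖v‖⁻¹ * (1 - c) := by
            rw [real_inner_smul_left, hv, inner_sub_left,
              real_inner_self_eq_norm_sq, he1, real_inner_comm, hcos]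
            ring
          refine eq_of_sq_eq (abs_nonneg _) hcosM_nonneg ?_
          rw [sq_abs, hx, hcosM_sq, abs_of_nonneg hcpos, mul_pow, hinv2]
          field_simp
        · have hx : (inner ℝ (‖v‖⁻¹ • v) e2 : ℝ) = ‖v‖⁻¹ * (c - 1) := by
            rw [real_inner_smul_left, hv, inner_sub_left,
              real_inner_self_eq_norm_sq, he2, hcos]
            ring
          refine eq_of_sq_eq (abs_nonneg _) hcosM_nonneg ?_
          rw [sq_abs, hx, hcosM_sq, abs_of_nonneg hcpos, mul_pow, hinv2]
          rw [show (c - 1) ^ 2 = (2 - 2 * c) * ((1 - c) / 2) by ring, ← mul_assoc,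
            inv_mul_cancel₀ h20.ne', one_mul]
    obtain ⟨u, hu, h1, h2⟩ := hwit
    refine ⟨u, hu, ?_⟩
    simp only [iInf_fin2, Matrix.cons_val_zero, Matrix.cons_val_one, Matrix.head_cons]
    rw [h1, h2, min_self, Real.arccos_cos hM0 hMπ]
  · -- upper bound
    rintro r ⟨u, hu, rfl⟩
    simp only [iInf_fin2, Matrix.cons_val_zero, Matrix.cons_val_one, Matrix.head_cons]
    have hun : ‖u‖ = 1 := by rwa [mem_sphere_zero_iff_norm] at hu
    have hU : (u 0) ^ 2 + (u 1) ^ 2 = 1 := by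
      have := real_inner_self_eq_norm_sq u
      rw [inner_expand, hun] at this; nlinarith
    set x : ℝ := (inner ℝ u e1 : ℝ) with hxdef
    set y : ℝ := (inner ℝ u e2 : ℝ) with hydef
    have key : x ^ 2 + y ^ 2 - 2 * c * (x * y) = 1 - c ^ 2 := by
      rw [hxdef, hydef, inner_expand, inner_expand, ← hC]
      linear_combination ((e1 0) * (e2 1) - (e1 1) * (e2 0)) ^ 2 * hU +
        ((e2 0) ^ 2 + (e2 1) ^ 2 - (u 0 * e2 0 + u 1 * e2 1) ^ 2) * hA +
        (1 - (u 0 * e1 0 + u 1 * e1 1) ^ 2) * hB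
    by_contra hcon
    push_neg at hcon
    rw [lt_min_iff] at hcon
    have hx' : |x| < Real.cos M := by
      by_contra h'
      push_neg at h'
      have := arccos_anti h'
      rw [Real.arccos_cos hM0 hMπ] at this
      exact absurd hcon.1 (not_lt.2 this)
    have hy' : |y| < Real.cos M := by
      by_contra h'
      push_neg at h'
      have := arccos_anti h'
      rw [Real.arccos_cos hM0 hMπ] at this
      exact absurd hcon.2 (not_lt.2 this)
    have hx2 : x ^ 2 < (1 - |c|) / 2 := by
      have h' : |x| ^ 2 < Real.cos M ^ 2 :=
        pow_lt_pow_left₀ hx' (abs_nonneg x) two_ne_zero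
      rw [sq_abs] at h'; rw [← hcosM_sq]; exact h'
    have hy2 : y ^ 2 < (1 - |c|) / 2 := by
      have h' : |y| ^ 2 < Real.cos M ^ 2 :=
        pow_lt_pow_left₀ hy' (abs_nonneg y) two_ne_zero
      rw [sq_abs] at h'; rw [← hcosM_sq]; exact h'
    exact contra_lem key hx2 hy2
end

section
/- Let S_n be a sequence of nondegenerate d-simplices in ℝ^d with vertices A_0^n,...,A_d^n, and suppose the normalized edge vectors t_{XY}^n = (Y^n − X^n)/|Y^n − X^n| converge for every pair of vertices. If some sequence of dihedral angles of a fixed subsimplex conv{A_0^n,...,A_{d'}^n} tends to π, then the limit vectors t_{XY} for pairs X,Y among A_0,...,A_{d'} span a space of dimension at most d'−1, and any d of the limit vectors t_{XY} (over all pairs) span a space of dimension at most d−1; hence sin_d of any d limiting edge-direction vectors is 0. -/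
open MeasureTheory Metric Set Filter
open scoped Classical

/-- `k`-dimensional (Hausdorff) measure of a subset of `ℝ^d`. -/
noncomputable def mea (d : ℕ) (r : ℝ) (s : Set (EuclideanSpace ℝ (Fin d))) : ℝ :=
  (μH[r] s).toReal

/-- The Eriksson `m`-sine of the simplex `conv{A 0, …, A m} ⊆ ℝ^d` at the vertex `A i`. -/
noncomputable def erikSin (d m : ℕ) (A : Fin (m + 1) → EuclideanSpace ℝ (Fin d))
    (i : Fin (m + 1)) : ℝ :=
  (m : ℝ) ^ (m - 1) * (mea d m (convexHull ℝ (Set.range A))) ^ (m - 1) /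
    ((Nat.factorial (m - 1)) *
      ∏ j ∈ Finset.univ.erase i, mea d ((m : ℝ) - 1) (convexHull ℝ (A '' {k | k ≠ j})))

/-- The extension of the Eriksson `d`-sine to `d`-tuples of vectors in `ℝ^d`, vanishing
on linearly dependent tuples. -/
noncomputable def sinTuple (d : ℕ) (t : Fin d → EuclideanSpace ℝ (Fin d)) : ℝ :=
  if LinearIndependent ℝ t then erikSin d d (Fin.cons 0 t) 0 else 0

/-- The dihedral angle of the simplex with vertices `B 0, …, B (m+2)` in `ℝ^d` between
the facets opposite the vertices `B i` and `B j`: the angle between the components of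
`B i` and `B j` orthogonal to the affine span of the remaining vertices (the ridge). -/
noncomputable def dihedralAngle (d m : ℕ) (B : Fin (m + 3) → EuclideanSpace ℝ (Fin d))
    (i j : Fin (m + 3)) : ℝ :=
  haveI : Nonempty (affineSpan ℝ (B '' {k | k ≠ i ∧ k ≠ j})) := by
    have hne : (({i, j} : Finset (Fin (m + 3)))ᶜ).Nonempty := by
      rw [← Finset.card_pos, Finset.card_compl]
      have := Finset.card_insert_le i ({j} : Finset (Fin (m + 3)))
      simp only [Finset.card_singleton, Fintype.card_fin] at *
      omega
    obtain ⟨k, hk⟩ := hne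
    simp only [Finset.mem_compl, Finset.mem_insert, Finset.mem_singleton, not_or] at hk
    exact ⟨⟨B k, subset_affineSpan ℝ _ ⟨k, ⟨hk.1, hk.2⟩, rfl⟩⟩⟩
  InnerProductGeometry.angle
    ((B i : EuclideanSpace ℝ (Fin d)) -
      (EuclideanGeometry.orthogonalProjection (affineSpan ℝ (B '' {k | k ≠ i ∧ k ≠ j}))
        (B i) : EuclideanSpace ℝ (Fin d)))
    ((B j : EuclideanSpace ℝ (Fin d)) -
      (EuclideanGeometry.orthogonalProjection (affineSpan ℝ (B '' {k | k ≠ i ∧ k ≠ j}))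
        (B j) : EuclideanSpace ℝ (Fin d)))

open InnerProductGeometry
open scoped RealInnerProductSpace Topology

/-!
Let `r_i`, `r_j` be the components of `A_i`, `A_j` orthogonal to the ridge spanned by the other
vertices of the subsimplex; the dihedral angle is the angle between them. When it tends to `π`,
`r_j` is asymptotically a negative multiple of `r_i`, so every normalised edge vector of the
subsimplex lies, up to `o(1)`, in the span of the ridge directions and of `r_i`, a space of
dimension at most `d' - 1`. Since linear independence is an open condition, the limit edge
directions span at most that much. Adding one more vertex `v` raises the dimension of the limit
span by at most one: if `k` is a vertex nearest to `v`, each edge direction at `v` is a bounded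
combination of edge directions at `k` and of the direction from `v` to `k`. The other `d - d'`
vertices therefore bring the dimension to at most `d - 1`, and `sin_d` vanishes on dependent
tuples.
-/

theorem tendsto_apply_of_finite {κ α X : Type*} [Finite κ] [TopologicalSpace X] {l : Filter α}
    {f : κ → α → X} {x : X} (hf : ∀ a, Tendsto (f a) l (𝓝 x)) (k : α → κ) :
    Tendsto (fun n => f (k n) n) l (𝓝 x) := fun _ hU =>
  (eventually_all.2 fun a => hf a hU).mono fun n hn => hn (k n)

section InnerProduct

variable {E : Type*} [NormedAddCommGroup E] [InnerProductSpace ℝ E]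

theorem norm_sub_smul_eq_norm_mul_sin_angle (u v : E) :
    ‖v - (⟪u, v⟫ / ‖u‖ ^ 2) • u‖ = ‖v‖ * Real.sin (angle u v) := by
  rcases eq_or_ne u 0 with rfl | hu
  · simp [angle_zero_left]
  have hu' : 0 < ‖u‖ := norm_pos_iff.2 hu
  refine mul_left_cancel₀ hu'.ne' ?_
  rw [show ‖u‖ * (‖v‖ * Real.sin (angle u v)) = Real.sin (angle u v) * (‖u‖ * ‖v‖) by ring,
    sin_angle_mul_norm_mul_norm,
    ← Real.sqrt_sq (by positivity : 0 ≤ ‖u‖ * ‖v - (⟪u, v⟫ / ‖u‖ ^ 2) • u‖)]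
  congr 1
  rw [mul_pow, norm_sub_sq_real, real_inner_self_eq_norm_sq, real_inner_self_eq_norm_sq,
    norm_smul, inner_smul_right, Real.norm_eq_abs, mul_pow, sq_abs, real_inner_comm u v]
  field_simp
  ring

theorem abs_mul_norm_le_norm_add_smul_add_smul {z u v : E} (hzu : ⟪z, u⟫ = 0) (hzv : ⟪z, v⟫ = 0)
    {α β : ℝ} (h : 0 ≤ α * β * ⟪u, v⟫) : |β| * ‖v‖ ≤ ‖z + α • u + β • v‖ := by
  refine abs_le_of_sq_le_sq' ?_ (norm_nonneg _) |>.2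
  rw [mul_pow, sq_abs, add_assoc, norm_add_sq_real, norm_add_sq_real, inner_add_right,
    real_inner_smul_right, real_inner_smul_right, hzu, hzv, norm_smul, norm_smul,
    real_inner_smul_left, real_inner_smul_right, Real.norm_eq_abs, Real.norm_eq_abs, mul_pow,
    mul_pow, sq_abs, sq_abs]
  nlinarith [sq_nonneg ‖z‖, sq_nonneg (α * ‖u‖)]

theorem finrank_sup_span_singleton_le [FiniteDimensional ℝ E] (V : Submodule ℝ E) (u : E) :
    Module.finrank ℝ ↥(V ⊔ ℝ ∙ u) ≤ Module.finrank ℝ V + 1 := by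
  have hu : Module.finrank ℝ (ℝ ∙ u) ≤ 1 := by simpa using finrank_span_le_card ({u} : Set E)
  have := Submodule.finrank_add_le_finrank_add_finrank V (ℝ ∙ u)
  omega

end InnerProduct

section ApproxMem

variable {E : Type*} [NormedAddCommGroup E] [InnerProductSpace ℝ E]

def ApproxMem (W : ℕ → Submodule ℝ E) (x : ℕ → E) : Prop :=
  ∃ w : ℕ → E, (∀ᶠ n in atTop, w n ∈ W n) ∧ Tendsto (fun n => x n - w n) atTop (𝓝 0)

variable {W : ℕ → Submodule ℝ E} {x : ℕ → E}

theorem ApproxMem.neg (hx : ApproxMem W x) : ApproxMem W fun n => -x n := by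
  obtain ⟨w, hw, hxw⟩ := hx
  refine ⟨fun n => -w n, hw.mono fun n hn => (W n).neg_mem hn, ?_⟩
  simpa only [neg_sub_neg, neg_sub, neg_zero] using hxw.neg

theorem approxMem_of_tendsto {l : E} (hx : Tendsto x atTop (𝓝 l))
    (hl : ∀ᶠ n in atTop, l ∈ W n) : ApproxMem W x :=
  ⟨fun _ => l, hl, by simpa using tendsto_sub_nhds_zero_iff.2 hx⟩

theorem ApproxMem.exists_tendsto {l : E} (hx : ApproxMem W x) (hl : Tendsto x atTop (𝓝 l)) :
    ∃ w : ℕ → E, (∀ᶠ n in atTop, w n ∈ W n) ∧ Tendsto w atTop (𝓝 l) := by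
  obtain ⟨w, hw, hxw⟩ := hx
  exact ⟨w, hw, by simpa using hl.sub hxw⟩

theorem finrank_span_le_of_forall_tendsto [FiniteDimensional ℝ E] {m : ℕ}
    (hW : ∀ᶠ n in atTop, Module.finrank ℝ (W n) ≤ m) {s : Set E} (hs : s.Finite)
    (hlim : ∀ v ∈ s, ∃ w : ℕ → E, (∀ᶠ n in atTop, w n ∈ W n) ∧ Tendsto w atTop (𝓝 v)) :
    Module.finrank ℝ (Submodule.span ℝ s) ≤ m := by
  obtain ⟨b, hbs, hspan, hli⟩ := exists_linearIndependent ℝ s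
  have : Fintype b := (hs.subset hbs).fintype
  choose w hwW hwlim using fun v : b => hlim v (hbs v.2)
  have hli_eventually : ∀ᶠ n in atTop, LinearIndependent ℝ fun v : b => w v n :=
    (tendsto_pi_nhds.2 hwlim).eventually hli.eventually
  obtain ⟨n, hn, hWn, hmem⟩ := (hli_eventually.and (hW.and (eventually_all.2 hwW))).exists
  calc Module.finrank ℝ (Submodule.span ℝ s)
      = Fintype.card b := by rw [← hspan, finrank_span_set_eq_card hli, Set.toFinset_card]
    _ = Module.finrank ℝ (Submodule.span ℝ (Set.range fun v : b => w v n)) :=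
        (finrank_span_eq_card hn).symm
    _ ≤ Module.finrank ℝ (W n) :=
        Submodule.finrank_mono (Submodule.span_le.2 (Set.range_subset_iff.2 hmem))
    _ ≤ m := hWn

theorem approxMem_of_angle_tendsto_pi {V : ℕ → Submodule ℝ E} {u v y : ℕ → E}
    (hu : ∀ n, u n ∈ (V n)ᗮ) (hv : ∀ n, v n ∈ (V n)ᗮ)
    (hang : Tendsto (fun n => angle (u n) (v n)) atTop (𝓝 Real.pi)) {α β : ℝ} (hαβ : α * β ≤ 0)
    (hy : ∀ n, y n - (α • u n + β • v n) ∈ V n) :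
    ApproxMem (fun n => V n ⊔ ℝ ∙ u n) fun n => ‖y n‖⁻¹ • y n := by
  set c : ℕ → ℝ := fun n => ⟪u n, v n⟫ / ‖u n‖ ^ 2
  set z : ℕ → E := fun n => y n - (α • u n + β • v n)
  have hinner : ∀ᶠ n in atTop, ⟪u n, v n⟫ ≤ 0 := by
    have hcos := (Real.continuous_cos.tendsto _).comp hang
    rw [Real.cos_pi] at hcos
    filter_upwards [hcos.eventually (gt_mem_nhds (by norm_num : (-1 : ℝ) < 0))] with n hn
    rw [← cos_angle_mul_norm_mul_norm]
    exact mul_nonpos_of_nonpos_of_nonneg hn.le (by positivity)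
  have hsin : Tendsto (fun n => Real.sin (angle (u n) (v n))) atTop (𝓝 0) := by
    have := (Real.continuous_sin.tendsto _).comp hang
    rwa [Real.sin_pi] at this
  refine ⟨fun n => ‖y n‖⁻¹ • (z n + (α + β * c n) • u n),
    Eventually.of_forall fun n => (V n ⊔ ℝ ∙ u n).smul_mem _ (Submodule.add_mem_sup (hy n)
      (Submodule.smul_mem _ _ (Submodule.mem_span_singleton_self _))), ?_⟩
  refine squeeze_zero_norm' ?_ hsin
  filter_upwards [hinner] with n hn
  have hdiff : y n - (z n + (α + β * c n) • u n) = β • (v n - c n • u n) := by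
    simp only [z]; module
  have hβ : |β| * ‖v n‖ ≤ ‖y n‖ := by
    simpa [z, add_assoc] using abs_mul_norm_le_norm_add_smul_add_smul
      (Submodule.inner_right_of_mem_orthogonal (hy n) (hu n))
      (Submodule.inner_right_of_mem_orthogonal (hy n) (hv n))
      (mul_nonneg_of_nonpos_of_nonpos hαβ hn)
  rw [← smul_sub, hdiff, norm_smul, norm_smul, norm_sub_smul_eq_norm_mul_sin_angle,
    norm_inv, norm_norm, Real.norm_eq_abs, ← mul_assoc, ← mul_assoc]
  exact mul_le_of_le_one_left (sin_angle_nonneg _ _)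
    (by rw [mul_assoc]; exact inv_mul_le_one_of_le₀ hβ (norm_nonneg _))

end ApproxMem

section Edges

variable {E : Type*} [NormedAddCommGroup E] [InnerProductSpace ℝ E] {ι : Type*}

noncomputable def edgeDir (p : ι → E) (X Y : ι) : E :=
  ‖p Y - p X‖⁻¹ • (p Y - p X)

def TendstoEdgeDir (P : ℕ → ι → E) (L : ι → ι → E) : Prop :=
  ∀ X Y, X ≠ Y → Tendsto (fun n => edgeDir (P n) X Y) atTop (𝓝 (L X Y))

def edgeSpan (L : ι → ι → E) (S : Set ι) : Submodule ℝ E :=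
  Submodule.span ℝ {v | ∃ X ∈ S, ∃ Y ∈ S, X ≠ Y ∧ v = L X Y}

theorem edgeDir_swap (p : ι → E) (X Y : ι) : edgeDir p Y X = -edgeDir p X Y := by
  rw [edgeDir, edgeDir, norm_sub_rev, ← smul_neg, neg_sub]

theorem norm_smul_edgeDir (p : ι → E) (X Y : ι) : ‖p Y - p X‖ • edgeDir p X Y = p Y - p X := by
  rcases eq_or_ne (p Y - p X) 0 with h | h
  · simp [edgeDir, h]
  · rw [edgeDir, smul_smul, mul_inv_cancel₀ (norm_ne_zero_iff.2 h), one_smul]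

theorem edgeSpan_singleton (L : ι → ι → E) (v : ι) : edgeSpan L {v} = ⊥ :=
  Submodule.span_eq_bot.2 fun _ ⟨_, hX, _, hY, hXY, _⟩ => absurd (hX.trans hY.symm) hXY

theorem edgeSpan_univ (L : ι → ι → E) :
    edgeSpan L univ = Submodule.span ℝ {v | ∃ X Y, X ≠ Y ∧ v = L X Y} := by
  simp only [edgeSpan, mem_univ, true_and]

theorem edgeSpan_comp {κ : Type*} (L : ι → ι → E) {f : κ → ι} (hf : Function.Injective f)
    (S : Set κ) : edgeSpan (fun X Y => L (f X) (f Y)) S = edgeSpan L (f '' S) := by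
  unfold edgeSpan
  congr 1
  ext v
  constructor
  · rintro ⟨X, hX, Y, hY, hXY, rfl⟩
    exact ⟨f X, ⟨X, hX, rfl⟩, f Y, ⟨Y, hY, rfl⟩, hf.ne hXY, rfl⟩
  · rintro ⟨_, ⟨X, hX, rfl⟩, _, ⟨Y, hY, rfl⟩, hXY, rfl⟩
    exact ⟨X, hX, Y, hY, fun h => hXY (congrArg f h), rfl⟩

variable [Finite ι] {P : ℕ → ι → E} {L : ι → ι → E}

theorem finrank_edgeSpan_le_of_approxMem [FiniteDimensional ℝ E] (hL : TendstoEdgeDir P L)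
    {W : ℕ → Submodule ℝ E} {m : ℕ} (hW : ∀ᶠ n in atTop, Module.finrank ℝ (W n) ≤ m)
    {S : Set ι} (happrox : ∀ X ∈ S, ∀ Y ∈ S, X ≠ Y → ApproxMem W fun n => edgeDir (P n) X Y) :
    Module.finrank ℝ (edgeSpan L S) ≤ m := by
  refine finrank_span_le_of_forall_tendsto hW
    ((Set.finite_range fun p : ι × ι => L p.1 p.2).subset ?_) ?_
  · rintro _ ⟨X, -, Y, -, -, rfl⟩
    exact ⟨(X, Y), rfl⟩
  · rintro _ ⟨X, hX, Y, hY, hXY, rfl⟩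
    exact (happrox X hX Y hY hXY).exists_tendsto (hL X Y hXY)

theorem approxMem_edgeDir_of_nearest (hL : TendstoEdgeDir P L) {S : Set ι} {v Y : ι}
    (hY : Y ∈ S) {k : ℕ → ι} (hkS : ∀ n, k n ∈ S)
    (hk : ∀ n, ‖P n (k n) - P n v‖ ≤ ‖P n Y - P n v‖) :
    ApproxMem (fun n => edgeSpan L S ⊔ ℝ ∙ edgeDir (P n) v (k n))
      fun n => edgeDir (P n) v Y := by
  set a : ℕ → ℝ := fun n => ‖P n (k n) - P n v‖
  set b : ℕ → ℝ := fun n => ‖P n Y - P n v‖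
  set c : ℕ → ℝ := fun n => ‖P n Y - P n (k n)‖
  have hc : ∀ n, c n / b n ≤ 2 := fun n => by
    refine div_le_of_le_mul₀ (norm_nonneg _) zero_le_two ?_
    calc c n ≤ b n + a n := (norm_sub_le_norm_sub_add_norm_sub _ (P n v) _).trans_eq
          (by rw [norm_sub_rev (P n v)])
      _ ≤ 2 * b n := by linarith [hk n]
  have hsplit : ∀ n, edgeDir (P n) v Y
      = (c n / b n) • edgeDir (P n) (k n) Y + (a n / b n) • edgeDir (P n) v (k n) := fun n => by
    rw [div_eq_inv_mul, div_eq_inv_mul, mul_smul, mul_smul, ← smul_add, norm_smul_edgeDir,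
      norm_smul_edgeDir, edgeDir, sub_add_sub_cancel]
  have hmem : ∀ n, (c n / b n) • L (k n) Y ∈ edgeSpan L S := fun n => by
    rcases eq_or_ne (k n) Y with h | h
    · simp [c, h]
    · exact Submodule.smul_mem _ _ (Submodule.subset_span ⟨k n, hkS n, Y, hY, h, rfl⟩)
  refine ⟨fun n => (c n / b n) • L (k n) Y + (a n / b n) • edgeDir (P n) v (k n),
    Eventually.of_forall fun n => Submodule.add_mem_sup (hmem n)
      (Submodule.smul_mem _ _ (Submodule.mem_span_singleton_self _)), ?_⟩
  -- `L Y Y` carries no information, but it only ever appears with the coefficient `c n = 0`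
  set δ : ι → ℕ → E := fun X n => if X = Y then 0 else edgeDir (P n) X Y - L X Y
  have hδ : Tendsto (fun n => δ (k n) n) atTop (𝓝 0) := by
    refine tendsto_apply_of_finite (fun X => ?_) k
    by_cases hX : X = Y
    · simp [δ, hX]
    · simpa [δ, hX] using tendsto_sub_nhds_zero_iff.2 (hL X Y hX)
  refine squeeze_zero_norm (fun n => ?_) (by simpa using hδ.norm.const_mul 2)
  dsimp only
  rw [hsplit, add_sub_add_right_eq_sub, ← smul_sub, norm_smul,
    Real.norm_of_nonneg (by positivity)]
  rcases eq_or_ne (k n) Y with h | h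
  · simp [c, h]
  · simpa [δ, h] using mul_le_mul_of_nonneg_right (hc n) (norm_nonneg _)

theorem finrank_edgeSpan_insert_le [FiniteDimensional ℝ E] (hL : TendstoEdgeDir P L)
    (S : Set ι) (v : ι) :
    Module.finrank ℝ (edgeSpan L (insert v S)) ≤ Module.finrank ℝ (edgeSpan L S) + 1 := by
  rcases S.eq_empty_or_nonempty with rfl | hS
  · rw [insert_empty_eq, edgeSpan_singleton, finrank_bot]
    exact Nat.zero_le _
  choose k hkS hk using fun n => S.exists_min_image (fun X => ‖P n X - P n v‖) S.toFinite hS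
  have hvY : ∀ Y ∈ S, ApproxMem (fun n => edgeSpan L S ⊔ ℝ ∙ edgeDir (P n) v (k n))
      fun n => edgeDir (P n) v Y := fun Y hY =>
    approxMem_edgeDir_of_nearest hL hY hkS fun n => hk n Y hY
  refine finrank_edgeSpan_le_of_approxMem hL
    (W := fun n => edgeSpan L S ⊔ ℝ ∙ edgeDir (P n) v (k n))
    (Eventually.of_forall fun n => finrank_sup_span_singleton_le _ _) ?_
  rintro X (rfl | hX) Y (rfl | hY) hXY
  · exact absurd rfl hXY
  · exact hvY Y hY
  · simpa only [← edgeDir_swap] using (hvY X hX).neg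
  · exact approxMem_of_tendsto (hL X Y hXY) (Eventually.of_forall fun n =>
      Submodule.mem_sup_left (Submodule.subset_span ⟨X, hX, Y, hY, hXY, rfl⟩))

theorem finrank_edgeSpan_union_le [FiniteDimensional ℝ E] (hL : TendstoEdgeDir P L)
    (S : Set ι) (F : Finset ι) :
    Module.finrank ℝ (edgeSpan L (S ∪ F)) ≤ Module.finrank ℝ (edgeSpan L S) + F.card := by
  classical
  induction F using Finset.induction_on with
  | empty => rw [Finset.coe_empty, Set.union_empty, Finset.card_empty, add_zero]
  | insert a F ha ih =>
    rw [Finset.coe_insert, Set.union_insert, Finset.card_insert_of_notMem ha]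
    exact (finrank_edgeSpan_insert_le hL _ a).trans (by omega)

theorem finrank_edgeSpan_le_of_angle_tendsto_pi [FiniteDimensional ℝ E] (hL : TendstoEdgeDir P L)
    {V : ℕ → Submodule ℝ E} {m : ℕ} (hV : ∀ n, Module.finrank ℝ (V n) ≤ m)
    {r : ℕ → ι → E} (hr_perp : ∀ n x, r n x ∈ (V n)ᗮ)
    (hr_sub : ∀ n x y, P n y - P n x - (r n y - r n x) ∈ V n)
    {K : Set ι} (hrK : ∀ n, ∀ x ∈ K, r n x = 0) {i j : ι} (hij : i ≠ j)
    (hang : Tendsto (fun n => angle (r n i) (r n j)) atTop (𝓝 Real.pi)) :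
    Module.finrank ℝ (edgeSpan L (insert i (insert j K))) ≤ m + 1 := by
  -- On the vertices `r n x = a x • r n i + b x • r n j` with `a x * b x = 0`, so the
  -- coefficients `α, β` of every edge satisfy `α * β ≤ 0`.
  set a : ι → ℝ := fun x => if x = i then 1 else 0
  set b : ι → ℝ := fun x => if x = j then 1 else 0
  have hr : ∀ n, ∀ x ∈ insert i (insert j K), r n x = a x • r n i + b x • r n j := by
    intro n x hx
    by_cases hxi : x = i
    · subst hxi; simp [a, b, hij]
    by_cases hxj : x = j
    · subst hxj; simp [a, b, Ne.symm hij]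
    simp [a, b, hxi, hxj, hrK n x (by simpa [hxi, hxj] using hx)]
  refine finrank_edgeSpan_le_of_approxMem hL (W := fun n => V n ⊔ ℝ ∙ r n i)
    (Eventually.of_forall fun n => (finrank_sup_span_singleton_le _ _).trans (by
      have := hV n; omega))
    fun X hX Y hY hXY => approxMem_of_angle_tendsto_pi (hr_perp · i) (hr_perp · j) hang
      (α := a Y - a X) (β := b Y - b X) ?_ fun n => ?_
  · simp only [a, b]
    split_ifs <;> subst_vars <;> norm_num at *
  · convert hr_sub n X Y using 2
    rw [hr n Y hY, hr n X hX]
    module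

end Edges

theorem finrank_edgeSpan_univ_le_of_dihedralAngle_tendsto_pi {d m : ℕ}
    {P : ℕ → Fin (m + 3) → EuclideanSpace ℝ (Fin d)}
    {L : Fin (m + 3) → Fin (m + 3) → EuclideanSpace ℝ (Fin d)} (hL : TendstoEdgeDir P L)
    {i j : Fin (m + 3)} (hij : i ≠ j)
    (hang : Tendsto (fun n => dihedralAngle d m (P n) i j) atTop (𝓝 Real.pi)) :
    Module.finrank ℝ (edgeSpan L univ) ≤ m + 1 := by
  set K : Set (Fin (m + 3)) := {k | k ≠ i ∧ k ≠ j}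
  have hK : K = ↑({i, j}ᶜ : Finset (Fin (m + 3))) := by ext; simp [K, and_comm]
  have hKcard : ({i, j}ᶜ : Finset (Fin (m + 3))).card = m + 1 := by
    rw [Finset.card_compl, Finset.card_pair hij, Fintype.card_fin]; rfl
  have : ∀ n, Nonempty (affineSpan ℝ (P n '' K)) := fun n => by
    obtain ⟨k, hk⟩ := Finset.card_pos.1 (by rw [hKcard]; omega)
    exact ⟨⟨P n k, subset_affineSpan ℝ _ ⟨k, hK ▸ hk, rfl⟩⟩⟩
  have h := finrank_edgeSpan_le_of_angle_tendsto_pi hL (V := fun n => vectorSpan ℝ (P n '' K))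
    (r := fun n x =>
      P n x - EuclideanGeometry.orthogonalProjection (affineSpan ℝ (P n '' K)) (P n x))
    (fun n => by
      rw [hK, ← Finset.coe_image]; exact finrank_vectorSpan_image_finset_le _ _ _ hKcard)
    (fun n x => by
      rw [← direction_affineSpan ℝ]
      exact EuclideanGeometry.vsub_orthogonalProjection_mem_direction_orthogonal _ _)
    (fun n x y => by
      rw [← direction_affineSpan ℝ]
      convert AffineSubspace.vsub_mem_direction
        (EuclideanGeometry.orthogonalProjection_mem (P n y))
        (EuclideanGeometry.orthogonalProjection_mem (P n x)) using 1
      rw [vsub_eq_sub]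
      abel)
    (fun n x hx => by
      rw [sub_eq_zero, eq_comm, EuclideanGeometry.orthogonalProjection_eq_self_iff]
      exact subset_affineSpan ℝ _ (Set.mem_image_of_mem _ hx))
    hij hang
  rwa [show insert i (insert j K) = univ by ext k; simp [K]; tauto] at h

theorem degenerate_dihedral_limit_general (d e : ℕ) (h : e + 3 ≤ d + 1)
    (A : ℕ → Fin (d + 1) → EuclideanSpace ℝ (Fin d))
    (L : Fin (d + 1) → Fin (d + 1) → EuclideanSpace ℝ (Fin d))
    (hL : ∀ X Y : Fin (d + 1), X ≠ Y →
      Tendsto (fun n => ‖A n Y - A n X‖⁻¹ • (A n Y - A n X)) atTop (nhds (L X Y)))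
    (hdih : ∃ i j : Fin (e + 3), i ≠ j ∧
      Tendsto (fun n => dihedralAngle d e (fun k => A n (Fin.castLE h k)) i j)
        atTop (nhds Real.pi)) :
    Module.finrank ℝ (Submodule.span ℝ
        {v | ∃ X Y : Fin (e + 3), X ≠ Y ∧ v = L (Fin.castLE h X) (Fin.castLE h Y)}) ≤ e + 1 ∧
    ∀ t : Fin d → EuclideanSpace ℝ (Fin d),
      (∀ k, ∃ X Y : Fin (d + 1), X ≠ Y ∧ t k = L X Y) →
      Module.finrank ℝ (Submodule.span ℝ (Set.range t)) ≤ d - 1 ∧ sinTuple d t = 0 := by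
  obtain ⟨i, j, hij, hang⟩ := hdih
  have hinj := Fin.castLE_injective h
  have hsub := finrank_edgeSpan_univ_le_of_dihedralAngle_tendsto_pi
    (L := fun X Y => L (Fin.castLE h X) (Fin.castLE h Y))
    (fun X Y hXY => hL _ _ (hinj.ne hXY)) hij hang
  have hall : Module.finrank ℝ (edgeSpan L univ) ≤ d - 1 := by
    have hgrow := finrank_edgeSpan_union_le hL (range (Fin.castLE h))
      (range (Fin.castLE h))ᶜ.toFinset
    rw [edgeSpan_comp L hinj, image_univ] at hsub
    rw [Set.coe_toFinset, union_compl_self, Set.toFinset_compl, Finset.card_compl,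
      Set.toFinset_range, Finset.card_image_of_injective _ hinj] at hgrow
    simp only [Finset.card_univ, Fintype.card_fin] at hgrow
    omega
  refine ⟨by rwa [edgeSpan_univ] at hsub, fun t ht => ?_⟩
  have hrank : Module.finrank ℝ (Submodule.span ℝ (range t)) ≤ d - 1 := by
    refine (Submodule.finrank_mono (Submodule.span_le.2 ?_)).trans hall
    rintro _ ⟨k, rfl⟩
    obtain ⟨X, Y, hXY, hk⟩ := ht k
    exact Submodule.subset_span ⟨X, mem_univ X, Y, mem_univ Y, hXY, hk⟩
  refine ⟨hrank, if_neg fun hli => ?_⟩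
  have := finrank_span_eq_card hli
  rw [Fintype.card_fin] at this
  omega

/-- Let `S_n` be nondegenerate `d`-simplices in `ℝ^d` whose normalized
edge vectors all converge. If some sequence of dihedral angles of the fixed subsimplex
on the first `d' + 1 = e + 3` vertices tends to `π`, then the limit edge directions of the
subsimplex span a space of dimension at most `d' − 1`, any `d` of the limit edge
directions span a space of dimension at most `d − 1`, and `sin_d` of any `d` limiting
edge directions is `0`. -/
theorem degenerate_dihedral_limit (d e : ℕ) (h : e + 3 ≤ d + 1)
    (A : ℕ → Fin (d + 1) → EuclideanSpace ℝ (Fin d))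
    (hA : ∀ n, AffineIndependent ℝ (A n))
    (L : Fin (d + 1) → Fin (d + 1) → EuclideanSpace ℝ (Fin d))
    (hL : ∀ X Y : Fin (d + 1), X ≠ Y →
      Tendsto (fun n => ‖A n Y - A n X‖⁻¹ • (A n Y - A n X)) atTop (nhds (L X Y)))
    (hdih : ∃ i j : Fin (e + 3), i ≠ j ∧
      Tendsto (fun n => dihedralAngle d e (fun k => A n (Fin.castLE h k)) i j)
        atTop (nhds Real.pi)) :
    Module.finrank ℝ (Submodule.span ℝ
        {v | ∃ X Y : Fin (e + 3), X ≠ Y ∧ v = L (Fin.castLE h X) (Fin.castLE h Y)}) ≤ e + 1 ∧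
    ∀ t : Fin d → EuclideanSpace ℝ (Fin d),
      (∀ k, ∃ X Y : Fin (d + 1), X ≠ Y ∧ t k = L X Y) →
      Module.finrank ℝ (Submodule.span ℝ (Set.range t)) ≤ d - 1 ∧ sinTuple d t = 0 :=
  degenerate_dihedral_limit_general d e h A L hL hdih
end
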